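/- Let B be a discrete valuation ring containing 1/2, with fraction field F. If an element b ∈ B is a sum of squares of elements of F, then b is a sum of squares of elements of B. -/

import Mathlib

/-!
Clearing denominators gives `d² b ∈ ΣB²` with `d ≠ 0`, so it suffices to cancel `π²` inside
`ΣB²`. If `π² c = ∑ yᵢ²` with some `yᵢ` a unit, normalising that one to `1` gives `1 + σ = π² w`
with `σ ∈ ΣB²`, and `w ∈ ΣB²` must be shown. The multiplicative binary form `a² + σ b²`
represents `π ε` at `(1 + π, 1)`, where `ε = 2 + π + π w` is a unit. If `π ∣ a² + σ b²` then
`a ≡ ±b (mod π)`, and composing `(a, ±b)` with `(1 + π, 1)` yields a value divisible by `π²`,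
so `ε (a² + σ b²) = π (a'² + σ b'²)`. Doing this twice starting from `(1, 1)` represents `ε² w`.
-/

section BinaryForm

variable {B : Type*} [CommRing B] [IsDomain B] {π σ ε : B}

theorem exists_mul_sq_add_mul_sq_eq_of_dvd_add (hπ : π ≠ 0) (hσ : π ∣ 1 + σ)
    (hε : π * ε = (1 + π) ^ 2 + σ) {a b : B} (hab : π ∣ a + b) :
    ∃ a' b', ε * (a ^ 2 + σ * b ^ 2) = π * (a' ^ 2 + σ * b' ^ 2) := by
  obtain ⟨a', ha'⟩ : π ∣ (1 + π) * a - σ * b := by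
    rw [show (1 + π) * a - σ * b = (a + b) + π * a - (1 + σ) * b by ring]
    exact dvd_sub (dvd_add hab (dvd_mul_right π a)) (hσ.mul_right b)
  obtain ⟨b', hb'⟩ : π ∣ a + (1 + π) * b := by
    rw [show a + (1 + π) * b = (a + b) + π * b by ring]
    exact dvd_add hab (dvd_mul_right π b)
  refine ⟨a', b', mul_left_cancel₀ hπ ?_⟩
  linear_combination (a ^ 2 + σ * b ^ 2) * hε + ((1 + π) * a - σ * b + π * a') * ha'
    + σ * (a + (1 + π) * b + π * b') * hb'

theorem exists_mul_sq_add_mul_sq_eq_of_dvd (hπ : Prime π) (hσ : π ∣ 1 + σ)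
    (hε : π * ε = (1 + π) ^ 2 + σ) {a b : B} (h : π ∣ a ^ 2 + σ * b ^ 2) :
    ∃ a' b', ε * (a ^ 2 + σ * b ^ 2) = π * (a' ^ 2 + σ * b' ^ 2) := by
  have hdiff : π ∣ (a - b) * (a + b) := by
    rw [show (a - b) * (a + b) = a ^ 2 + σ * b ^ 2 - (1 + σ) * b ^ 2 by ring]
    exact dvd_sub h (hσ.mul_right _)
  rcases hπ.dvd_or_dvd hdiff with hab | hab
  · rw [← neg_sq b]
    exact exists_mul_sq_add_mul_sq_eq_of_dvd_add hπ.ne_zero hσ hε (by rwa [← sub_eq_add_neg])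
  · exact exists_mul_sq_add_mul_sq_eq_of_dvd_add hπ.ne_zero hσ hε hab

theorem isSumSq_of_one_add_eq_sq_mul [IsLocalRing B] (h2 : IsUnit (2 : B)) (hπ : Prime π)
    (hσ : IsSumSq σ) {w : B} (h : 1 + σ = π ^ 2 * w) : IsSumSq w := by
  set ε := 2 + π + π * w
  have hε : π * ε = (1 + π) ^ 2 + σ := by linear_combination -h
  have hεu : IsUnit ε := by
    have hπw : ¬IsUnit (π * (1 + w)) := fun hu => hπ.not_isUnit (isUnit_of_mul_isUnit_left hu)
    refine (IsLocalRing.isUnit_or_isUnit_of_isUnit_add (b := -(π * (1 + w))) ?_).resolve_right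
      (by rwa [IsUnit.neg_iff])
    convert h2 using 1
    ring
  have hσπ : π ∣ 1 + σ := h ▸ (dvd_pow_self π two_ne_zero).mul_right w
  obtain ⟨a₁, b₁, h₁⟩ := exists_mul_sq_add_mul_sq_eq_of_dvd (a := 1) (b := 1) hπ hσπ hε (by simpa)
  have h₁' : a₁ ^ 2 + σ * b₁ ^ 2 = π * (ε * w) :=
    mul_left_cancel₀ hπ.ne_zero (by linear_combination -h₁ + ε * h)
  obtain ⟨a₂, b₂, h₂⟩ := exists_mul_sq_add_mul_sq_eq_of_dvd hπ hσπ hε (h₁' ▸ dvd_mul_right π _)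
  have hw : ε ^ 2 * w = a₂ ^ 2 + σ * b₂ ^ 2 :=
    mul_left_cancel₀ hπ.ne_zero (by linear_combination h₂ - ε * h₁')
  obtain ⟨η, hη⟩ := hεu.exists_left_inv
  rw [show w = (η * η) * (a₂ * a₂ + σ * (b₂ * b₂)) by
    linear_combination η ^ 2 * hw - (η * ε + 1) * w * hη]
  exact (IsSumSq.mul_self η).mul ((IsSumSq.mul_self a₂).add (hσ.mul (IsSumSq.mul_self b₂)))

end BinaryForm

theorem IsSumSq.exists_eq_sq_mul_or_exists_eq_sq_add {R : Type*} [CommSemiring R] (π : R)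
    {s : R} (hs : IsSumSq s) :
    (∃ t, IsSumSq t ∧ s = π ^ 2 * t) ∨ ∃ y t, ¬π ∣ y ∧ IsSumSq t ∧ s = y ^ 2 + t := by
  induction hs with
  | zero => exact .inl ⟨0, .zero, by simp⟩
  | @sq_add a s hs ih =>
    by_cases ha : π ∣ a
    · obtain ⟨a', rfl⟩ := ha
      rcases ih with ⟨t, ht, rfl⟩ | ⟨y, t, hy, ht, rfl⟩
      · exact .inl ⟨a' * a' + t, .sq_add a' ht, by ring⟩
      · exact .inr ⟨y, π * a' * (π * a') + t, hy, .sq_add _ ht, by ring⟩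
    · exact .inr ⟨a, s, ha, hs, by ring⟩

theorem IsSumSq.exists_algebraMap_eq_sq_mul {R S : Type*} [CommRing R] [CommRing S]
    [Algebra R S] (M : Submonoid R) [IsLocalization M S] {x : S} (hx : IsSumSq x) :
    ∃ (d : M) (t : R), IsSumSq t ∧ algebraMap R S t = algebraMap R S d ^ 2 * x := by
  induction hx with
  | zero => exact ⟨1, 0, .zero, by simp⟩
  | @sq_add a s hs ih =>
    obtain ⟨d, t, ht, hdt⟩ := ih
    obtain ⟨⟨n, m⟩, hnm⟩ := IsLocalization.surj M a
    refine ⟨d * m, d * n * (d * n) + m * m * t, .sq_add _ ((IsSumSq.mul_self _).mul ht), ?_⟩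
    simp only [map_add, map_mul, Submonoid.coe_mul, ← hnm, hdt]
    ring

section DVR

variable {B : Type*} [CommRing B] [IsDomain B] [IsDiscreteValuationRing B]

theorem Irreducible.isUnit_of_not_dvd {π y : B} (hπ : Irreducible π) (h : ¬π ∣ y) :
    IsUnit y := by
  by_contra hy
  have hmem : y ∈ IsLocalRing.maximalIdeal B := hy
  rw [hπ.maximalIdeal_eq, Ideal.mem_span_singleton] at hmem
  exact h hmem

theorem Irreducible.isSumSq_of_isSumSq_sq_mul (h2 : IsUnit (2 : B)) {π c : B} (hπ : Irreducible π)
    (hc : IsSumSq (π ^ 2 * c)) : IsSumSq c := by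
  rcases hc.exists_eq_sq_mul_or_exists_eq_sq_add π with ⟨t, ht, hct⟩ | ⟨y, t, hy, ht, hct⟩
  · rwa [mul_left_cancel₀ (pow_ne_zero 2 hπ.ne_zero) hct]
  · obtain ⟨u, hu⟩ := (hπ.isUnit_of_not_dvd hy).exists_left_inv
    have hw : IsSumSq (u * u * c) := by
      refine isSumSq_of_one_add_eq_sq_mul h2 (UniqueFactorizationMonoid.irreducible_iff_prime.mp hπ)
        ((IsSumSq.mul_self u).mul ht) ?_
      linear_combination (u * u) * hct.symm - (u * y + 1) * hu
    rw [show c = y * y * (u * u * c) by linear_combination (-c * (u * y + 1)) * hu]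
    exact (IsSumSq.mul_self y).mul hw

theorem isSumSq_of_isSumSq_sq_mul_of_ne_zero (h2 : IsUnit (2 : B)) {d c : B} (hd : d ≠ 0)
    (hc : IsSumSq (d ^ 2 * c)) : IsSumSq c := by
  obtain ⟨π, hπ⟩ := IsDiscreteValuationRing.exists_irreducible B
  obtain ⟨k, u, rfl⟩ := IsDiscreteValuationRing.eq_unit_mul_pow_irreducible hd hπ
  have hk : IsSumSq ((π ^ k) ^ 2 * c) := by
    rw [show (π ^ k) ^ 2 * c = ↑u⁻¹ * ↑u⁻¹ * ((↑u * π ^ k) ^ 2 * c) by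
      linear_combination (-(π ^ k) ^ 2 * c * (↑u⁻¹ * ↑u + 1)) * u.inv_mul]
    exact (IsSumSq.mul_self _).mul hc
  clear hc hd
  induction k with
  | zero => simpa using hk
  | succ k ih =>
    exact ih (hπ.isSumSq_of_isSumSq_sq_mul h2 (by convert hk using 1; ring))

end DVR

/-- Let `B` be a discrete valuation ring in which `2` is a unit, with fraction
field `F`. If `b ∈ B` is a sum of squares in `F`, then `b` is a sum of squares in `B`. -/
theorem dvr_sum_of_squares_descends
    (B : Type*) [CommRing B] [IsDomain B] [IsDiscreteValuationRing B]
    (h2 : IsUnit (2 : B)) (b : B)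
    (hb : IsSumSq (algebraMap B (FractionRing B) b)) : IsSumSq b := by
  obtain ⟨d, t, ht, hdt⟩ := hb.exists_algebraMap_eq_sq_mul (nonZeroDivisors B)
  have htb : t = (d : B) ^ 2 * b := IsFractionRing.injective B (FractionRing B) (by simpa)
  exact isSumSq_of_isSumSq_sq_mul_of_ne_zero h2 (nonZeroDivisors.coe_ne_zero d) (htb ▸ ht)
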